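/- arXiv:2510.09311 — 5 statements merged into one kernel-verified Lean document; each statement's English description precedes it below -/
import Mathlib

section
/- Let S be a language over an alphabet Σ, let Q be a string over Σ of length n, and let i, j be indices with 0 ≤ i ≤ j ≤ n. Then Q[i..j) belongs to the Kleene star S* if and only if (i, j) lies in the reflexive–transitive closure of the relation Rel_S on indices defined by Rel_S(a, b) :⇔ a ≤ b ≤ n and Q[a..b) ∈ S. (This is the correctness of Case 3.2 of the dynamic programming algorithm: the match graph of a starred expression is the transitive closure, together with all self-loops, of the match graph of its subexpression.) -/
open Computability

/-- The substring `Q[i..j)` of `Q`: characters at positions `i` through `j-1` (0-indexed). -/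
def substr {α : Type*} (Q : List α) (i j : ℕ) : List α := (Q.drop i).take (j - i)

lemma substr_append {α : Type*} (Q : List α) (i k j : ℕ) (h1 : i ≤ k) (h2 : k ≤ j) :
    substr Q i k ++ substr Q k j = substr Q i j := by
  unfold substr
  have hj : j - i = (k - i) + (j - k) := by omega
  rw [hj, List.take_add, List.drop_drop]
  have e : i + (k - i) = k := by omega
  rw [e]

lemma append_mem_kstar' {α : Type*} {S : Language α} {x y : List α}
    (hx : x ∈ S∗) (hy : y ∈ S) : x ++ y ∈ S∗ := by
  rw [Language.mem_kstar] at hx ⊢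
  obtain ⟨L, rfl, hL⟩ := hx
  refine ⟨L ++ [y], by simp, ?_⟩
  intro z hz
  simp at hz
  rcases hz with h | rfl
  · exact hL z h
  · exact hy

lemma rtg_le {r : ℕ → ℕ → Prop} (hr : ∀ a b, r a b → a ≤ b) {i j : ℕ}
    (h : Relation.ReflTransGen r i j) : i ≤ j := by
  induction h with
  | refl => exact le_refl _
  | tail _ hbc ih => exact ih.trans (hr _ _ hbc)

/-- Correctness of Case 3.2 of the dynamic programming algorithm: the substring `Q[i..j)`
belongs to the Kleene star `S∗` iff `(i, j)` lies in the reflexive–transitive closure of the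
relation `Rel_S (a, b) ↔ a ≤ b ≤ n ∧ Q[a..b) ∈ S` on indices. -/
theorem matchGraph_star {α : Type*} (S : Language α) (Q : List α) (n : ℕ)
    (hn : n = Q.length) (i j : ℕ) (hij : i ≤ j) (hjn : j ≤ n) :
    substr Q i j ∈ S∗ ↔
      Relation.ReflTransGen (fun a b => a ≤ b ∧ b ≤ n ∧ substr Q a b ∈ S) i j := by
  constructor
  · intro h
    rw [Language.mem_kstar] at h
    obtain ⟨L, hL, hmem⟩ := h
    have key : ∀ (L : List (List α)), (∀ y ∈ L, y ∈ S) → ∀ i, i ≤ j →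
        substr Q i j = L.flatten →
        Relation.ReflTransGen (fun a b => a ≤ b ∧ b ≤ n ∧ substr Q a b ∈ S) i j := by
      intro L
      induction L with
      | nil =>
        intro _ i hij hL
        have hlen := congrArg List.length hL
        simp [substr] at hlen
        have : j = i := by omega
        subst this
        exact Relation.ReflTransGen.refl
      | cons x rest ih =>
        intro hmem i hij hL
        have hlen := congrArg List.length hL
        simp [substr] at hlen
        have hx : x.length ≤ j - i := by omega
        set k := i + x.length with hk
        have hkj : k ≤ j := by omega
        have h1 : substr Q i k = x := by
          have h := congrArg (List.take x.length) hL
          simp only [List.flatten_cons, List.take_left] at h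
          simp only [substr] at h ⊢
          rw [List.take_take] at h
          rw [Nat.min_eq_left hx] at h
          simpa [hk] using h
        have h2 : substr Q k j = rest.flatten := by
          have h := congrArg (List.drop x.length) hL
          simp only [List.flatten_cons, List.drop_left] at h
          simp only [substr] at h ⊢
          rw [List.drop_take, List.drop_drop] at h
          have e1 : j - i - x.length = j - k := by omega
          rw [e1] at h
          exact h
        refine Relation.ReflTransGen.head ⟨by omega, by omega, h1 ▸ hmem x (by simp)⟩ ?_
        exact ih (fun y hy => hmem y (by simp [hy])) k hkj h2
    exact key L hmem i hij hL
  · intro h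
    have hle : ∀ a b, (fun a b => a ≤ b ∧ b ≤ n ∧ substr Q a b ∈ S) a b → a ≤ b :=
      fun a b hab => hab.1
    clear hij
    induction h with
    | refl => simp [substr]; exact Language.nil_mem_kstar S
    | @tail b c hab hbc ih =>
      have hib : i ≤ b := rtg_le hle hab
      rw [← substr_append Q i b c hib hbc.1]
      exact append_mem_kstar' (ih (hbc.1.trans hbc.2.1)) hbc.2.2
end

section
/- (Clustering lemma, part (ii).) Let T(R) be the parse tree of an extended regular expression R, let K be the set of its nodes labeled by an extended operator (∩ or ¬), and let P = K ∪ { lca(u, v) : u, v ∈ K } be the set of extended nodes. Then every internal cluster of the cluster partition CS of T(R) contains exactly one extended node; in particular, no cluster contains two distinct nodes of P. -/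
/-- Extended regular expressions over alphabet `α`; their syntax trees are the parse trees. -/
inductive ERE (α : Type) : Type
  | eps : ERE α
  | char : α → ERE α
  | concat : ERE α → ERE α → ERE α
  | union : ERE α → ERE α → ERE α
  | inter : ERE α → ERE α → ERE α
  | compl : ERE α → ERE α
  | star : ERE α → ERE α

/-- Nodes of the parse tree `T(R)` are addressed by root-to-node paths (`false` = left/only
child, `true` = right child); `subtreeAt R p` is the subexpression rooted at node `p`,
or `none` if `p` is not a node of `T(R)`. -/
def subtreeAt {α : Type} : ERE α → List Bool → Option (ERE α)
  | R, [] => some R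
  | .concat S T, b :: p => subtreeAt (bif b then T else S) p
  | .union S T, b :: p => subtreeAt (bif b then T else S) p
  | .inter S T, b :: p => subtreeAt (bif b then T else S) p
  | .compl S, false :: p => subtreeAt S p
  | .star S, false :: p => subtreeAt S p
  | _, _ => none

/-- `p` is a node of the parse tree of `R`. -/
def IsNode {α : Type} (R : ERE α) (p : List Bool) : Prop := (subtreeAt R p).isSome

/-- `p` is a node of the parse tree of `R` labeled by an extended operator (`∩` or `¬`). -/
def IsExtOpNode {α : Type} (R : ERE α) (p : List Bool) : Prop :=
  (∃ S T, subtreeAt R p = some (ERE.inter S T)) ∨ (∃ S, subtreeAt R p = some (ERE.compl S))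

/-- `K R`: the set of nodes labeled by an extended operator. -/
def extOpNodes {α : Type} (R : ERE α) : Set (List Bool) := {p | IsExtOpNode R p}

/-- Longest common prefix = lowest common ancestor of two nodes. -/
def lcp : List Bool → List Bool → List Bool
  | a :: u, b :: v => if a = b then a :: lcp u v else []
  | _, _ => []

/-- `P R = K ∪ { lca(u,v) : u, v ∈ K }`: the set of extended nodes. -/
def extNodes {α : Type} (R : ERE α) : Set (List Bool) :=
  extOpNodes R ∪ {w | ∃ u ∈ extOpNodes R, ∃ v ∈ extOpNodes R, w = lcp u v}

/-- An edge of `T(R)` from a node `p ∈ P` to a child of `p` is external; all other edges are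
internal.  The clusters are the connected components after deleting the external edges; each
cluster is identified by its root, namely the node `r` that is either the root of `T(R)` or
whose parent edge is external. -/
def IsClusterRoot {α : Type} (R : ERE α) (r : List Bool) : Prop :=
  IsNode R r ∧ (r = [] ∨ r.dropLast ∈ extNodes R)

/-- The cluster with root `r`: all nodes `u` reachable from `r` going only through internal
edges (the parent of a node `q` is `q.dropLast`). -/
def cluster {α : Type} (R : ERE α) (r : List Bool) : Set (List Bool) :=
  {u | IsNode R u ∧ r <+: u ∧
    ∀ q : List Bool, r <+: q → q <+: u → q ≠ r → q.dropLast ∉ extNodes R}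

/-- In the macro tree, a cluster `C'` with root `q` is a child cluster of the cluster with
root `r` when the parent of `q` belongs to `cluster R r`. -/
def HasChildCluster {α : Type} (R : ERE α) (r : List Bool) : Prop :=
  ∃ q : List Bool, IsClusterRoot R q ∧ q ≠ [] ∧ q.dropLast ∈ cluster R r

/-- A leaf cluster: a cluster with no child cluster in the macro tree. -/
def IsLeafCluster {α : Type} (R : ERE α) (r : List Bool) : Prop :=
  IsClusterRoot R r ∧ ¬ HasChildCluster R r

/-- An internal cluster: a cluster with at least one child cluster in the macro tree. -/
def IsInternalCluster {α : Type} (R : ERE α) (r : List Bool) : Prop :=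
  IsClusterRoot R r ∧ HasChildCluster R r

lemma prefix_antisymm {a b : List Bool} (h1 : a <+: b) (h2 : b <+: a) : a = b :=
  h1.eq_of_length (Nat.le_antisymm h1.length_le h2.length_le)

lemma lcp_prefix_left : ∀ u v : List Bool, lcp u v <+: u
  | [], _ => by simp [lcp]
  | _ :: _, [] => by simp [lcp]
  | a :: u, b :: v => by
    by_cases h : a = b
    · simpa [lcp, h] using lcp_prefix_left u v
    · simp [lcp, h]

lemma lcp_comm : ∀ u v : List Bool, lcp u v = lcp v u
  | [], v => by cases v <;> simp [lcp]
  | _ :: _, [] => by simp [lcp]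
  | a :: u, b :: v => by
    by_cases h : a = b
    · subst h; simp [lcp, lcp_comm u v]
    · simp [lcp, h, Ne.symm h]

lemma lcp_prefix_right (u v : List Bool) : lcp u v <+: v := lcp_comm u v ▸ lcp_prefix_left v u

lemma prefix_lcp : ∀ r u v : List Bool, r <+: u → r <+: v → r <+: lcp u v
  | [], _, _, _, _ => List.nil_prefix
  | a :: r, u, v, hu, hv => by
    obtain ⟨tu, rfl⟩ := hu
    obtain ⟨tv, rfl⟩ := hv
    simp only [List.cons_append, lcp, if_pos rfl]
    simpa using prefix_lcp r (r ++ tu) (r ++ tv) (List.prefix_append r tu) (List.prefix_append r tv)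

lemma lcp_self (u : List Bool) : lcp u u = u :=
  prefix_antisymm (lcp_prefix_left u u) (prefix_lcp u u u List.prefix_rfl List.prefix_rfl)

/-- The lcp of `lcp x y` with `a` is `lcp x a` or `lcp y a`. -/
lemma lcp_lcp (x y a : List Bool) : lcp (lcp x y) a = lcp x a ∨ lcp (lcp x y) a = lcp y a := by
  rcases List.prefix_or_prefix_of_prefix (lcp_prefix_right x a) (lcp_prefix_right y a) with h | h
  · left
    refine prefix_antisymm ?_ ?_
    · exact prefix_lcp _ _ _ ((lcp_prefix_left _ a).trans (lcp_prefix_left x y))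
        (lcp_prefix_right _ a)
    · exact prefix_lcp _ _ _
        (prefix_lcp _ _ _ (lcp_prefix_left x a) (h.trans (lcp_prefix_left y a)))
        (lcp_prefix_right x a)
  · right
    refine prefix_antisymm ?_ ?_
    · exact prefix_lcp _ _ _ ((lcp_prefix_left _ a).trans (lcp_prefix_right x y))
        (lcp_prefix_right _ a)
    · exact prefix_lcp _ _ _
        (prefix_lcp _ _ _ (h.trans (lcp_prefix_left x a)) (lcp_prefix_left y a))
        (lcp_prefix_right y a)

/-- Every extended node is the lcp of two extended-operator nodes. -/
lemma extNodes_eq_lcp {α : Type} {R : ERE α} {w : List Bool} (hw : w ∈ extNodes R) :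
    ∃ u ∈ extOpNodes R, ∃ v ∈ extOpNodes R, w = lcp u v := by
  rcases hw with hw | hw
  · exact ⟨w, hw, w, hw, (lcp_self w).symm⟩
  · exact hw

/-- `extNodes` is closed under `lcp`. -/
lemma lcp_mem_extNodes {α : Type} {R : ERE α} {p q : List Bool}
    (hp : p ∈ extNodes R) (hq : q ∈ extNodes R) : lcp p q ∈ extNodes R := by
  obtain ⟨u1, hu1, v1, hv1, rfl⟩ := extNodes_eq_lcp hp
  obtain ⟨u2, hu2, v2, hv2, rfl⟩ := extNodes_eq_lcp hq
  have step : ∀ x, x ∈ extOpNodes R → lcp x (lcp u2 v2) ∈ extNodes R := by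
    intro x hx
    rcases lcp_lcp u2 v2 x with h | h <;> rw [lcp_comm x, h]
    · exact Or.inr ⟨u2, hu2, x, hx, rfl⟩
    · exact Or.inr ⟨v2, hv2, x, hx, rfl⟩
  rcases lcp_lcp u1 v1 (lcp u2 v2) with h | h <;> rw [h]
  · exact step u1 hu1
  · exact step v1 hv1

/-- If `m` is an extended node with `r <+: m`, then `m` cannot be a strict prefix of an
element of `cluster R r`. -/
lemma no_strict_ext {α : Type} {R : ERE α} {r x m : List Bool}
    (hx : x ∈ cluster R r) (hm : m ∈ extNodes R) (hrm : r <+: m)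
    (hmx : m <+: x) (hne : m ≠ x) : False := by
  obtain ⟨t, rfl⟩ := hmx
  cases t with
  | nil => exact hne (by simp)
  | cons b t =>
    refine hx.2.2 (m ++ [b]) (hrm.trans ⟨[b], rfl⟩) ⟨t, by simp⟩ ?_ ?_
    · intro h
      have : r <+: m := hrm
      have hlen := this.length_le
      rw [← h] at hlen
      simp at hlen
    · rw [List.dropLast_concat]
      exact hm

/-- No cluster contains two distinct extended nodes. -/
lemma cluster_extNode_unique {α : Type} {R : ERE α} {r p q : List Bool}
    (hp : p ∈ cluster R r) (hq : q ∈ cluster R r)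
    (hpe : p ∈ extNodes R) (hqe : q ∈ extNodes R) : p = q := by
  by_contra hne
  have hm : lcp p q ∈ extNodes R := lcp_mem_extNodes hpe hqe
  have hrm : r <+: lcp p q := prefix_lcp _ _ _ hp.2.1 hq.2.1
  by_cases h : lcp p q = p
  · exact no_strict_ext hq hm hrm (lcp_prefix_right p q) (fun he => hne (h.symm.trans he))
  · exact no_strict_ext hp hm hrm (lcp_prefix_left p q) h

/-- Clustering lemma, part (ii): every internal cluster contains exactly one extended node;
in particular, no cluster contains two distinct extended nodes. -/
theorem internalCluster_unique_extNode {α : Type} (R : ERE α) :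
    (∀ r, IsInternalCluster R r → ∃! p, p ∈ cluster R r ∧ p ∈ extNodes R) ∧
    (∀ r, IsClusterRoot R r → ∀ p ∈ cluster R r, ∀ q ∈ cluster R r,
      p ∈ extNodes R → q ∈ extNodes R → p = q) := by
  constructor
  · intro r hr
    obtain ⟨hroot, q, hq, hqne, hqd⟩ := hr
    have hqe : q.dropLast ∈ extNodes R := by
      rcases hq.2 with h | h
      · exact absurd h hqne
      · exact h
    exact ⟨q.dropLast, ⟨hqd, hqe⟩, fun p hp =>
      cluster_extNode_unique hp.1 hqd hp.2 hqe⟩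
  · intro r _ p hp q hq hpe hqe
    exact cluster_extNode_unique hp hq hpe hqe
end

section
/- Let T(R) be the parse tree of an extended regular expression R with k ≥ 1 nodes labeled by an extended operator, and let CS be its cluster partition. Then the parent in T(R) of the root of every leaf cluster is a node labeled by an extended operator, and consequently the macro tree has at most 2k leaf clusters. -/
/-!
If a cluster root `r` is an ancestor of an extended-operator node `u`, then the cluster of `r`
has a child cluster: either the path from `r` to `u` crosses an external edge, or `u` lies in the
cluster and the edge to its (first) child is external. So a leaf cluster has no extended-operator
node below its root `r`. The parent `p` of `r` is an extended node; were `p = lca(u, v)` distinct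
from `u, v ∈ K`, then each child of `p`, in particular `r`, would be an ancestor of `u` or of `v`.
Hence `p ∈ K`, and since `p` has at most two children there are at most `2k` leaf clusters.
-/

variable {α : Type}

theorem subtreeAt_append (R : ERE α) (p q : List Bool) :
    subtreeAt R (p ++ q) = (subtreeAt R p).bind (subtreeAt · q) := by
  induction p generalizing R with
  | nil => simp [subtreeAt]
  | cons b p ih =>
    cases R <;> cases b <;> simp [subtreeAt, ih]

theorem IsNode.of_prefix {R : ERE α} {u p : List Bool} (h : IsNode R u) (hp : p <+: u) :
    IsNode R p := by
  obtain ⟨t, rfl⟩ := hp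
  rw [IsNode, subtreeAt_append] at h
  cases hs : subtreeAt R p <;> simp_all [IsNode]

theorem isNode_append_false_of_mem_extOpNodes {R : ERE α} {u : List Bool}
    (hu : u ∈ extOpNodes R) : IsNode R (u ++ [false]) := by
  rw [IsNode, subtreeAt_append]
  rcases hu with ⟨S, T, h⟩ | ⟨S, h⟩ <;> simp [h, subtreeAt]

theorem lcp_append_singleton_prefix :
    ∀ (u v : List Bool) (c : Bool), lcp u v ≠ u → lcp u v ≠ v →
      lcp u v ++ [c] <+: u ∨ lcp u v ++ [c] <+: v
  | [], _, _, hu, _ => absurd (by simp [lcp]) hu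
  | _ :: _, [], _, _, hv => absurd (by simp [lcp]) hv
  | a :: u, b :: v, c, hu, hv => by
    by_cases hab : a = b
    · subst hab
      simp only [lcp, if_true, ne_eq, List.cons.injEq, true_and, List.cons_append,
        List.cons_prefix_cons] at hu hv ⊢
      exact lcp_append_singleton_prefix u v c hu hv
    · cases a <;> cases b <;> cases c <;> simp_all [lcp]

theorem hasChildCluster_of_mem_cluster {R : ERE α} {r u : List Bool} {c : Bool}
    (hu : u ∈ cluster R r) (hP : u ∈ extNodes R) (hc : IsNode R (u ++ [c])) :
    HasChildCluster R r :=
  ⟨u ++ [c], ⟨hc, Or.inr (by simpa using hP)⟩, by simp, by simpa using hu⟩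

theorem mem_cluster_or_hasChildCluster {R : ERE α} {r u : List Bool} (hu : IsNode R u)
    (hru : r <+: u) : u ∈ cluster R r ∨ HasChildCluster R r := by
  obtain ⟨t, rfl⟩ := hru
  induction t using List.reverseRecOn with
  | nil =>
    rw [List.append_nil] at hu ⊢
    refine Or.inl ⟨hu, List.prefix_refl r, fun q hrq hqr hne => ?_⟩
    exact absurd (hqr.eq_of_length (le_antisymm hqr.length_le hrq.length_le)) hne
  | append_singleton t c ih =>
    rw [← List.append_assoc] at hu ⊢
    rcases ih (hu.of_prefix (List.prefix_append _ _)) with hmem | hchild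
    · by_cases hP : r ++ t ∈ extNodes R
      · exact Or.inr (hasChildCluster_of_mem_cluster hmem hP hu)
      · refine Or.inl ⟨hu, (List.prefix_append r t).trans (List.prefix_append _ _),
          fun q hrq hq hne => ?_⟩
        rcases List.prefix_concat_iff.1 hq with rfl | hq
        · simpa using hP
        · exact hmem.2.2 q hrq hq hne
    · exact Or.inr hchild

theorem hasChildCluster_of_prefix_mem_extOpNodes {R : ERE α} {r u : List Bool}
    (hu : u ∈ extOpNodes R) (hru : r <+: u) : HasChildCluster R r := by
  have hchild := isNode_append_false_of_mem_extOpNodes hu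
  rcases mem_cluster_or_hasChildCluster (hchild.of_prefix (List.prefix_append u _)) hru with
    hmem | h
  · exact hasChildCluster_of_mem_cluster hmem (Or.inl hu) hchild
  · exact h

theorem IsLeafCluster.ne_nil {R : ERE α} {r : List Bool} (hr : IsLeafCluster R r)
    (hK : (extOpNodes R).Nonempty) : r ≠ [] := by
  rintro rfl
  obtain ⟨u, hu⟩ := hK
  exact hr.2 (hasChildCluster_of_prefix_mem_extOpNodes hu List.nil_prefix)

theorem IsLeafCluster.dropLast_mem_extOpNodes {R : ERE α} {r : List Bool}
    (hr : IsLeafCluster R r) (hne : r ≠ []) : r.dropLast ∈ extOpNodes R := by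
  obtain ⟨⟨-, hroot⟩, hleaf⟩ := hr
  rcases hroot.resolve_left hne with hK | ⟨u, hu, v, hv, hlcp⟩
  · exact hK
  by_cases hlu : lcp u v = u
  · rwa [hlcp, hlu]
  by_cases hlv : lcp u v = v
  · rwa [hlcp, hlv]
  have hsplit : lcp u v ++ [r.getLast hne] = r := hlcp ▸ List.dropLast_append_getLast hne
  rcases lcp_append_singleton_prefix u v (r.getLast hne) hlu hlv with h | h
  · exact absurd (hasChildCluster_of_prefix_mem_extOpNodes hu (hsplit ▸ h)) hleaf
  · exact absurd (hasChildCluster_of_prefix_mem_extOpNodes hv (hsplit ▸ h)) hleaf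

theorem Set.ncard_le_ncard_mul_card_of_dropLast_mem {β : Type*} [Finite β]
    {S K : Set (List β)} (hK : K.Finite) (h : ∀ r ∈ S, r ≠ [] ∧ r.dropLast ∈ K) :
    S.ncard ≤ K.ncard * Nat.card β := by
  have hS : S ⊆ (fun pb : List β × β => pb.1 ++ [pb.2]) '' (K ×ˢ Set.univ) := fun r hr =>
    ⟨(r.dropLast, r.getLast (h r hr).1), ⟨(h r hr).2, trivial⟩,
      List.dropLast_append_getLast (h r hr).1⟩
  have hfin : (K ×ˢ (Set.univ : Set β)).Finite := hK.prod Set.finite_univ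
  calc S.ncard ≤ ((fun pb : List β × β => pb.1 ++ [pb.2]) '' (K ×ˢ Set.univ)).ncard :=
        Set.ncard_le_ncard hS (hfin.image _)
    _ ≤ (K ×ˢ (Set.univ : Set β)).ncard := Set.ncard_image_le hfin
    _ = K.ncard * Nat.card β := by rw [Set.ncard_prod, Set.ncard_univ]

/-- If the parse tree of `R` has `k ≥ 1` nodes labeled by an extended operator, then the
parent of the root of every leaf cluster is a node labeled by an extended operator, and
consequently the macro tree has at most `2k` leaf clusters. -/
theorem leafCluster_parent_and_count {α : Type} (R : ERE α) (k : ℕ)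
    (hk : (extOpNodes R).ncard = k) (hk1 : 1 ≤ k) :
    (∀ r, IsLeafCluster R r → r ≠ [] ∧ r.dropLast ∈ extOpNodes R) ∧
    {r | IsLeafCluster R r}.ncard ≤ 2 * k := by
  have hK : (extOpNodes R).Nonempty := Set.nonempty_of_ncard_ne_zero (by omega)
  have parent : ∀ r, IsLeafCluster R r → r ≠ [] ∧ r.dropLast ∈ extOpNodes R :=
    fun r hr => ⟨hr.ne_nil hK, hr.dropLast_mem_extOpNodes (hr.ne_nil hK)⟩
  refine ⟨parent, ?_⟩
  calc {r | IsLeafCluster R r}.ncard ≤ (extOpNodes R).ncard * Nat.card Bool :=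
        Set.ncard_le_ncard_mul_card_of_dropLast_mem (Set.finite_of_ncard_pos (by omega)) parent
    _ = 2 * k := by rw [hk, Nat.card_eq_fintype_card, Fintype.card_bool, mul_comm]
end

section
/- (Language-theoretic form of the cluster combination lemma, Lemma 4.) Let A be an ε-NFA over the alphabet Σ ∪ {β}, where β ∉ Σ is a fresh symbol, with states θ, φ, θ', φ', such that the β-labeled transitions of A are exactly the single transition from θ' to φ' (for all states s, t: t ∈ step(s, β) iff s = θ' and t = φ'). For states s, t let L(s, t) be the set of strings over Σ ∪ {β} that label a path from s to t in A (ε-transitions allowed), and let LΣ(s, t) = L(s, t) ∩ Σ* be the β-free such strings. Let M be any language over Σ, and let subst_β(L(θ, φ), M) over Σ be the β-substitution of M into L(θ, φ), i.e., the set of strings u₀v₁u₁v₂⋯v_k u_k (k ≥ 0) such that each u_h ∈ Σ*, each v_h ∈ M, and u₀ β u₁ β ⋯ β u_k ∈ L(θ, φ). Then subst_β(L(θ, φ), M) = LΣ(θ, φ) ∪ LΣ(θ, θ') · M · ( LΣ(φ', θ') · M )* · LΣ(φ', φ), where · denotes language concatenation and * denotes Kleene star. -/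
open Computability

/-- `expand β M x`: the language of all strings obtained from `x` by replacing each
occurrence of the symbol `β` by some string of the language `M` (keeping all other
characters).  Thus `{w | ∃ x ∈ L, w ∈ expand β M x}` is the `β`-substitution of `M`
into `L`: exactly the strings `u₀ v₁ u₁ v₂ ⋯ v_k u_k` with each `u_h` `β`-free, each
`v_h ∈ M`, and `u₀ β u₁ β ⋯ β u_k ∈ L`. -/
def expand {Γ : Type*} [DecidableEq Γ] (β : Γ) (M : Language Γ) : List Γ → Language Γ
  | [] => 1
  | a :: x => (if a = β then M else {[a]}) * expand β M x

/-- `pathLang A s t`: the set of strings labeling a path from state `s` to state `t`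
in the ε-NFA `A` (`ε`-transitions allowed). -/
def pathLang {Γ σ : Type*} (A : εNFA Γ σ) (s t : σ) : Language Γ :=
  {w | t ∈ A.evalFrom {s} w}

/-- `pathLangFree A β s t = LΣ(s, t)`: the `β`-free strings labeling a path from `s` to `t`. -/
def pathLangFree {Γ σ : Type*} (A : εNFA Γ σ) (β : Γ) (s t : σ) : Language Γ :=
  {w | t ∈ A.evalFrom {s} w ∧ β ∉ w}

/-!
Write `S s` for the `β`-substitution of `M` into `L(s, φ)`. Since the only `β`-transition is
`θ' → φ'`, splitting a path at its first `β` gives `S s = LΣ(s,φ) + LΣ(s,θ') · M · S φ'`.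
At `s = φ'` this makes `S φ'` a solution of `Y ⊇ LΣ(φ',φ) + LΣ(φ',θ') · M · Y`, so it contains
the least one, `(LΣ(φ',θ') · M)* · LΣ(φ',φ)`; conversely, induction on the length of the
path word shows that `S s` lies below the right-hand side.
-/

namespace εNFA

variable {α σ : Type*} (M : εNFA α σ)

theorem mem_evalFrom_append_iff {s t : σ} {u v : List α} :
    t ∈ M.evalFrom {s} (u ++ v) ↔ ∃ m ∈ M.evalFrom {s} u, t ∈ M.evalFrom {m} v := by
  simp_rw [mem_evalFrom_iff_exists_path, List.reduceOption_eq_append_iff]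
  constructor
  · rintro ⟨_, ⟨x, y, rfl, rfl, rfl⟩, hxy⟩
    obtain ⟨m, hx, hy⟩ := M.isPath_append.1 hxy
    exact ⟨m, ⟨x, rfl, hx⟩, ⟨y, rfl, hy⟩⟩
  · rintro ⟨m, ⟨x, rfl, hx⟩, ⟨y, rfl, hy⟩⟩
    exact ⟨x ++ y, ⟨x, y, rfl, rfl, rfl⟩, M.isPath_append.2 ⟨m, hx, hy⟩⟩

theorem mem_evalFrom_append_cons_iff {s t : σ} {u v : List α} {a : α} :
    t ∈ M.evalFrom {s} (u ++ a :: v) ↔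
      ∃ p ∈ M.evalFrom {s} u, ∃ q ∈ M.step p (some a), t ∈ M.evalFrom {q} v := by
  have hε (q : σ) : t ∈ M.evalFrom {q} v ↔ ∃ m ∈ M.εClosure {q}, t ∈ M.evalFrom {m} v := by
    simpa using M.mem_evalFrom_append_iff (u := []) (v := v)
  rw [← List.singleton_append, ← List.append_assoc, mem_evalFrom_append_iff]
  simp only [evalFrom_append_singleton, mem_stepSet_iff]
  simp only [M.mem_εClosure_iff_exists (S := M.step _ _)]
  constructor
  · rintro ⟨m, ⟨p, hp, q, hq, hm⟩, ht⟩
    exact ⟨p, hp, q, hq, (hε q).2 ⟨m, hm, ht⟩⟩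
  · rintro ⟨p, hp, q, hq, ht⟩
    obtain ⟨m, hm, ht⟩ := (hε q).1 ht
    exact ⟨m, ⟨p, hp, q, hq, hm⟩, ht⟩

end εNFA

section Expand

variable {Γ : Type*} [DecidableEq Γ] {β : Γ} (M : Language Γ)

theorem expand_append (x y : List Γ) :
    expand β M (x ++ y) = expand β M x * expand β M y := by
  induction x with
  | nil => simp [expand]
  | cons a x ih => simp [expand, ih, mul_assoc]

theorem expand_of_not_mem {x : List Γ} (h : β ∉ x) : expand β M x = {x} := by
  induction x with
  | nil => rfl
  | cons a x ih =>
    rw [List.mem_cons, not_or] at h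
    rw [expand, if_neg (Ne.symm h.1), ih h.2, Language.mul_def]
    exact Set.image2_singleton

theorem expand_append_cons_self {u : List Γ} (hu : β ∉ u) (v : List Γ) :
    expand β M (u ++ β :: v) = {u} * (M * expand β M v) := by
  rw [expand_append, expand_of_not_mem M hu, expand, if_pos rfl]

end Expand

theorem add_mul_kstar_mul_le {α : Type*} [KleeneAlgebra α] (a b : α) :
    b + a * (a∗ * b) ≤ a∗ * b :=
  add_le (le_mul_of_one_le_left' one_le_kstar)
    (mul_assoc a a∗ b ▸ mul_le_mul_left mul_kstar_le_kstar b)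

def substSymbol {Γ : Type*} [DecidableEq Γ] (β : Γ) (M L : Language Γ) : Language Γ :=
  {w | ∃ x ∈ L, w ∈ expand β M x}

theorem substSymbol_le_iff {Γ : Type*} [DecidableEq Γ] {β : Γ} {M L R : Language Γ} :
    substSymbol β M L ≤ R ↔ ∀ x ∈ L, expand β M x ≤ R :=
  ⟨fun h x hx _ hw => h ⟨x, hx, hw⟩, fun h _ ⟨x, hx, hw⟩ => h x hx hw⟩

section Cluster

variable {Γ σ : Type*} {A : εNFA Γ σ} {β : Γ} {θ' φ' : σ}

theorem mem_pathLang_append_cons_iff (hβ : ∀ s t : σ, t ∈ A.step s (some β) ↔ s = θ' ∧ t = φ')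
    {s t : σ} {u v : List Γ} :
    u ++ β :: v ∈ pathLang A s t ↔ u ∈ pathLang A s θ' ∧ v ∈ pathLang A φ' t := by
  show t ∈ A.evalFrom {s} (u ++ β :: v) ↔ θ' ∈ A.evalFrom {s} u ∧ t ∈ A.evalFrom {φ'} v
  simp [εNFA.mem_evalFrom_append_cons_iff, hβ]

variable [DecidableEq Γ] (M : Language Γ)

theorem pathLangFree_le_substSymbol {s t : σ} :
    pathLangFree A β s t ≤ substSymbol β M (pathLang A s t) :=
  fun w hw => ⟨w, hw.1, by rw [expand_of_not_mem M hw.2]; rfl⟩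

theorem pathLangFree_mul_mul_substSymbol_le
    (hβ : ∀ s t : σ, t ∈ A.step s (some β) ↔ s = θ' ∧ t = φ') {s t : σ} :
    pathLangFree A β s θ' * M * substSymbol β M (pathLang A φ' t) ≤
      substSymbol β M (pathLang A s t) := by
  rintro _ ⟨_, ⟨u, hu, m, hm, rfl⟩, w, ⟨v, hv, hw⟩, rfl⟩
  refine ⟨u ++ β :: v, (mem_pathLang_append_cons_iff hβ).2 ⟨hu.1, hv⟩, ?_⟩
  rw [expand_append_cons_self M hu.2]
  show u ++ m ++ w ∈ _
  rw [List.append_assoc]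
  exact Language.append_mem_mul rfl (Language.append_mem_mul hm hw)

theorem expand_le_of_mem_pathLang
    (hβ : ∀ s t : σ, t ∈ A.step s (some β) ↔ s = θ' ∧ t = φ') {s φ : σ} {x : List Γ}
    (hx : x ∈ pathLang A s φ) :
    expand β M x ≤ pathLangFree A β s φ + pathLangFree A β s θ' * M *
      ((pathLangFree A β φ' θ' * M)∗ * pathLangFree A β φ' φ) := by
  by_cases hβx : β ∈ x
  · obtain ⟨u, v, rfl, hu⟩ := List.eq_append_cons_of_mem hβx
    obtain ⟨hθ', hv⟩ := (mem_pathLang_append_cons_iff hβ).1 hx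
    have : v.length < (u ++ β :: v).length := by simp; omega
    have ih := expand_le_of_mem_pathLang hβ hv
    rw [expand_append_cons_self M hu, ← mul_assoc]
    refine le_add_left ?_
    gcongr
    · exact Set.singleton_subset_iff.2 ⟨hθ', hu⟩
    · exact ih.trans (add_mul_kstar_mul_le _ _)
  · rw [expand_of_not_mem M hβx]
    exact le_add_right (Set.singleton_subset_iff.2 ⟨hx, hβx⟩)
termination_by x.length

end Cluster

theorem cluster_combination_general {Γ σ : Type*} [DecidableEq Γ] (A : εNFA Γ σ) (β : Γ)
    (θ φ θ' φ' : σ)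
    (hβ : ∀ s t : σ, t ∈ A.step s (some β) ↔ s = θ' ∧ t = φ')
    (M : Language Γ) :
    {w | ∃ x ∈ pathLang A θ φ, w ∈ expand β M x} =
      pathLangFree A β θ φ +
        pathLangFree A β θ θ' * M * (pathLangFree A β φ' θ' * M)∗ * pathLangFree A β φ' φ := by
  have hstar : (pathLangFree A β φ' θ' * M)∗ * pathLangFree A β φ' φ ≤
      substSymbol β M (pathLang A φ' φ) :=
    kstar_mul_le (pathLangFree_le_substSymbol M) (pathLangFree_mul_mul_substSymbol_le M hβ)
  change substSymbol β M (pathLang A θ φ) = _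
  rw [mul_assoc _ (_∗)]
  apply le_antisymm
  · exact substSymbol_le_iff.2 fun x hx => expand_le_of_mem_pathLang M hβ hx
  · exact add_le (pathLangFree_le_substSymbol M)
      ((mul_le_mul_right hstar _).trans (pathLangFree_mul_mul_substSymbol_le M hβ))

/-- Language-theoretic form of the cluster combination lemma (Lemma 4).  If the `β`-labeled
transitions of `A` are exactly the single extended transition from `θ'` to `φ'`, and `M` is
any language over `Σ = Γ \ {β}`, then the `β`-substitution of `M` into `L(θ, φ)` equals
`LΣ(θ,φ) ∪ LΣ(θ,θ') · M · (LΣ(φ',θ') · M)* · LΣ(φ',φ)`. -/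
theorem cluster_combination {Γ σ : Type*} [DecidableEq Γ] (A : εNFA Γ σ) (β : Γ)
    (θ φ θ' φ' : σ)
    (hβ : ∀ s t : σ, t ∈ A.step s (some β) ↔ s = θ' ∧ t = φ')
    (M : Language Γ) (hM : ∀ w ∈ M, β ∉ w) :
    {w | ∃ x ∈ pathLang A θ φ, w ∈ expand β M x} =
      pathLangFree A β θ φ +
        pathLangFree A β θ θ' * M * (pathLangFree A β φ' θ' * M)∗ * pathLangFree A β φ' φ :=
  cluster_combination_general A β θ φ θ' φ' hβ M
end

section
/- (Thompson construction size bounds.) For every regular expression R over an alphabet Σ with m nodes in its syntax tree, there exists an ε-NFA A with at most 2m states, whose set of transitions (triples (s, x, t) with x ∈ Σ ∪ {ε} and t ∈ step(s, x)) is finite of cardinality at most 4m, and whose accepted language equals L(R). -/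
/-- The size of a regular expression: the number of nodes of its syntax tree. -/
def reSize {α : Type} : RegularExpression α → ℕ
  | .zero => 1
  | .epsilon => 1
  | .char _ => 1
  | .plus S T => reSize S + reSize T + 1
  | .comp S T => reSize S + reSize T + 1
  | .star S => reSize S + 1

/-!
Thompson's construction builds, by recursion on `R`, an ε-NFA with a single start and a single
accepting state: two states and at most one edge for a leaf, and for `S + T`, `S * T` and `S∗`
the machines of the parts glued together with at most two fresh states and at most four fresh
ε-edges. This gives at most `2m` states and `4m` edges.

For correctness, a run reading `w` from a state `q` to the accepting state is followed backwards:
for each gluing one exhibits a predicate on a state and the word still to be read which holds at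
the accepting state and survives stepping back along every edge. At the start state it says that
`w` lies in the language of the regular expression; the converse inclusion is witnessed by
concatenating runs of the parts.
-/

open Computability

theorem List.reduceOption_cons {α : Type*} (x : Option α) (l : List (Option α)) :
    (x :: l).reduceOption = x.toList ++ l.reduceOption := by
  cases x <;> rfl

theorem Language.append_mem_kstar {α : Type*} {l : Language α} {u v : List α} (hu : u ∈ l)
    (hv : v ∈ l∗) : u ++ v ∈ l∗ :=
  mul_kstar_le_kstar (a := l) (Language.append_mem_mul hu hv)

namespace εNFA

variable {α σ τ : Type*} {M : εNFA α σ} {N : εNFA α τ} {s t u : σ} {w v : List α}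

def Reads (M : εNFA α σ) (s t : σ) (w : List α) : Prop :=
  ∃ x : List (Option α), x.reduceOption = w ∧ M.IsPath s t x

theorem Reads.refl (M : εNFA α σ) (s : σ) : M.Reads s s [] :=
  ⟨[], rfl, .nil s⟩

theorem Reads.cons {x : Option α} (h : t ∈ M.step s x) (hr : M.Reads t u w) :
    M.Reads s u (x.toList ++ w) := by
  obtain ⟨l, rfl, hl⟩ := hr
  exact ⟨x :: l, List.reduceOption_cons x l, .cons t s u x l h hl⟩

theorem Reads.cons_none (h : t ∈ M.step s none) (hr : M.Reads t u w) : M.Reads s u w :=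
  Reads.cons h hr

theorem Reads.trans (h₁ : M.Reads s t w) (h₂ : M.Reads t u v) : M.Reads s u (w ++ v) := by
  obtain ⟨l₁, rfl, hl₁⟩ := h₁
  obtain ⟨l₂, rfl, hl₂⟩ := h₂
  exact ⟨l₁ ++ l₂, List.reduceOption_append _ _, M.isPath_append.2 ⟨t, hl₁, hl₂⟩⟩

theorem Reads.snoc_none (hr : M.Reads s t w) (h : u ∈ M.step t none) : M.Reads s u w := by
  simpa using hr.trans (Reads.cons_none h (Reads.refl M u))

theorem Reads.map (f : σ → τ) (hf : ∀ s x t, t ∈ M.step s x → f t ∈ N.step (f s) x)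
    (h : M.Reads s t w) : N.Reads (f s) (f t) w := by
  obtain ⟨l, rfl, hl⟩ := h
  refine ⟨l, rfl, ?_⟩
  induction hl with
  | nil s => exact .nil _
  | cons t s u x l h _ ih => exact .cons _ _ _ x l (hf s x t h) ih

theorem Reads.backward_induction {P : σ → List α → Prop} (h_nil : P t [])
    (h_step : ∀ s x u w, u ∈ M.step s x → P u w → P s (x.toList ++ w))
    (h : M.Reads s t w) : P s w := by
  obtain ⟨l, rfl, hl⟩ := h
  induction hl with
  | nil => exact h_nil
  | cons u s t x l h _ ih =>
    rw [List.reduceOption_cons]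
    exact h_step s x u _ h (ih h_nil)

theorem mem_accepts_iff_reads :
    w ∈ M.accepts ↔ ∃ s ∈ M.start, ∃ t ∈ M.accept, M.Reads s t w := by
  simp only [mem_accepts_iff_exists_path, Reads]
  tauto

end εNFA

/-- Edges are kept as a list, so that their number is bounded by its length. -/
structure ThompsonNFA (α : Type*) (σ : Type*) where
  transitions : List (σ × Option α × σ)
  start : σ
  accept : σ

namespace ThompsonNFA

open εNFA

variable {α σ τ : Type*}

def toεNFA (M : ThompsonNFA α σ) : εNFA α σ where
  step s x := {t | (s, x, t) ∈ M.transitions}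
  start := {M.start}
  accept := {M.accept}

@[simp]
theorem mem_toεNFA_step {M : ThompsonNFA α σ} {s t : σ} {x : Option α} :
    t ∈ M.toεNFA.step s x ↔ (s, x, t) ∈ M.transitions :=
  Iff.rfl

theorem mem_accepts_iff {M : ThompsonNFA α σ} {w : List α} :
    w ∈ M.toεNFA.accepts ↔ M.toεNFA.Reads M.start M.accept w := by
  simp [mem_accepts_iff_reads, toεNFA]

theorem transitionSet_toεNFA (M : ThompsonNFA α σ) :
    {p : σ × Option α × σ | p.2.2 ∈ M.toεNFA.step p.1 p.2.1} = {p | p ∈ M.transitions} :=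
  rfl

theorem finite_transitionSet (M : ThompsonNFA α σ) :
    {p : σ × Option α × σ | p.2.2 ∈ M.toεNFA.step p.1 p.2.1}.Finite := by
  rw [transitionSet_toεNFA]
  exact M.transitions.finite_toSet

theorem ncard_transitionSet_le (M : ThompsonNFA α σ) :
    {p : σ × Option α × σ | p.2.2 ∈ M.toεNFA.step p.1 p.2.1}.ncard ≤ M.transitions.length := by
  classical
  rw [transitionSet_toεNFA, ← List.coe_toFinset, Set.ncard_coe_finset]
  exact List.toFinset_card_le _

def relabel (f : σ → τ) : σ × Option α × σ → τ × Option α × τ :=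
  Prod.map f (Prod.map id f)

theorem reads_relabel {M : ThompsonNFA α σ} {N : ThompsonNFA α τ} (f : σ → τ)
    (hf : ∀ p ∈ M.transitions, relabel f p ∈ N.transitions) {s t : σ} {w : List α}
    (h : M.toεNFA.Reads s t w) : N.toεNFA.Reads (f s) (f t) w :=
  h.map f fun s x t hst => hf (s, x, t) hst

def empty : ThompsonNFA α Bool := ⟨[], false, true⟩

def edge (x : Option α) : ThompsonNFA α Bool := ⟨[(false, x, true)], false, true⟩

def plus (S : ThompsonNFA α σ) (T : ThompsonNFA α τ) : ThompsonNFA α (Bool ⊕ σ ⊕ τ) :=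
  ⟨[(.inl false, none, .inr (.inl S.start)), (.inl false, none, .inr (.inr T.start)),
      (.inr (.inl S.accept), none, .inl true), (.inr (.inr T.accept), none, .inl true)] ++
    S.transitions.map (relabel (.inr ∘ .inl)) ++ T.transitions.map (relabel (.inr ∘ .inr)),
    .inl false, .inl true⟩

def comp (S : ThompsonNFA α σ) (T : ThompsonNFA α τ) : ThompsonNFA α (σ ⊕ τ) :=
  ⟨(.inl S.accept, none, .inr T.start) ::
    (S.transitions.map (relabel .inl) ++ T.transitions.map (relabel .inr)),
    .inl S.start, .inr T.accept⟩

def star (S : ThompsonNFA α σ) : ThompsonNFA α (σ ⊕ Bool) :=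
  ⟨[(.inr false, none, .inr true), (.inr false, none, .inl S.start),
      (.inl S.accept, none, .inr true), (.inl S.accept, none, .inl S.start)] ++
    S.transitions.map (relabel .inl),
    .inr false, .inr true⟩

theorem length_transitions_empty : (empty : ThompsonNFA α Bool).transitions.length = 0 :=
  rfl

theorem length_transitions_edge (x : Option α) : (edge x).transitions.length = 1 :=
  rfl

theorem length_transitions_plus (S : ThompsonNFA α σ) (T : ThompsonNFA α τ) :
    (S.plus T).transitions.length = S.transitions.length + T.transitions.length + 4 := by
  simp only [plus, List.length_append, List.length_map, List.length_cons, List.length_nil]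
  omega

theorem length_transitions_comp (S : ThompsonNFA α σ) (T : ThompsonNFA α τ) :
    (S.comp T).transitions.length = S.transitions.length + T.transitions.length + 1 := by
  simp only [comp, List.length_append, List.length_map, List.length_cons]

theorem length_transitions_star (S : ThompsonNFA α σ) :
    S.star.transitions.length = S.transitions.length + 4 := by
  simp only [star, List.length_append, List.length_map, List.length_cons, List.length_nil]
  omega

theorem accepts_empty : (empty : ThompsonNFA α Bool).toεNFA.accepts = 0 := by
  ext w
  refine ⟨fun h => ?_, False.elim⟩
  have : false = true :=
    (mem_accepts_iff.1 h).backward_induction (P := fun s _ => s = true) rfl (by simp [empty])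
  exact Bool.false_ne_true this

theorem accepts_edge (x : Option α) : (edge x).toεNFA.accepts = {x.toList} := by
  ext w
  change _ ↔ w = x.toList
  rw [mem_accepts_iff]
  constructor
  · intro h
    exact h.backward_induction (P := fun s w => w = cond s [] x.toList) rfl (by simp [edge])
  · rintro rfl
    simpa using Reads.cons (by simp [edge]) (Reads.refl (edge x).toεNFA (edge x).accept)

theorem accepts_plus (S : ThompsonNFA α σ) (T : ThompsonNFA α τ) :
    (S.plus T).toεNFA.accepts = S.toεNFA.accepts + T.toεNFA.accepts := by
  ext w
  rw [mem_accepts_iff, Language.mem_add, mem_accepts_iff, mem_accepts_iff]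
  constructor
  · intro h
    refine h.backward_induction (P := fun q w => match q with
      | .inl false => S.toεNFA.Reads S.start S.accept w ∨ T.toεNFA.Reads T.start T.accept w
      | .inl true => w = []
      | .inr (.inl s) => S.toεNFA.Reads s S.accept w
      | .inr (.inr t) => T.toεNFA.Reads t T.accept w) rfl ?_
    intro s x u w h
    simp only [plus, relabel, List.cons_append, List.nil_append, mem_toεNFA_step, List.mem_cons,
      Prod.mk.injEq, List.mem_append, List.mem_map, Prod.exists, Prod.map_apply,
      Function.comp_apply, id_eq, ↓existsAndEq, true_and] at h
    rcases h with ⟨rfl, rfl, rfl⟩ | ⟨rfl, rfl, rfl⟩ | ⟨rfl, rfl, rfl⟩ | ⟨rfl, rfl, rfl⟩ |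
      ⟨a, b, h, rfl, rfl⟩ | ⟨a, b, h, rfl, rfl⟩
    · exact Or.inl
    · exact Or.inr
    · rintro rfl
      exact Reads.refl _ _
    · rintro rfl
      exact Reads.refl _ _
    · exact Reads.cons h
    · exact Reads.cons h
  · have hS : ∀ p ∈ S.transitions, relabel (Sum.inr ∘ Sum.inl) p ∈ (S.plus T).transitions :=
      fun p hp => List.mem_append_left _ (List.mem_append_right _ (List.mem_map_of_mem hp))
    have hT : ∀ p ∈ T.transitions, relabel (Sum.inr ∘ Sum.inr) p ∈ (S.plus T).transitions :=
      fun p hp => List.mem_append_right _ (List.mem_map_of_mem hp)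
    rintro (h | h)
    · exact Reads.cons_none (by simp [plus]) ((reads_relabel _ hS h).snoc_none (by simp [plus]))
    · exact Reads.cons_none (by simp [plus]) ((reads_relabel _ hT h).snoc_none (by simp [plus]))

theorem accepts_comp (S : ThompsonNFA α σ) (T : ThompsonNFA α τ) :
    (S.comp T).toεNFA.accepts = S.toεNFA.accepts * T.toεNFA.accepts := by
  ext w
  simp only [Language.mem_mul, mem_accepts_iff]
  constructor
  · intro h
    refine h.backward_induction (P := fun q w => match q with
      | .inl s => ∃ u, S.toεNFA.Reads s S.accept u ∧
          ∃ v, T.toεNFA.Reads T.start T.accept v ∧ u ++ v = w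
      | .inr t => T.toεNFA.Reads t T.accept w) (Reads.refl _ _) ?_
    intro s x u w h
    simp only [comp, relabel, mem_toεNFA_step, List.mem_cons, Prod.mk.injEq, List.mem_append,
      List.mem_map, Prod.exists, Prod.map_apply, id_eq, ↓existsAndEq, true_and] at h
    rcases h with ⟨rfl, rfl, rfl⟩ | ⟨a, b, h, rfl, rfl⟩ | ⟨a, b, h, rfl, rfl⟩
    · exact fun hw => ⟨[], Reads.refl _ _, w, hw, rfl⟩
    · rintro ⟨u, hu, v, hv, rfl⟩
      exact ⟨_, hu.cons h, v, hv, List.append_assoc _ _ _⟩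
    · exact Reads.cons h
  · rintro ⟨u, hu, v, hv, rfl⟩
    have hS : ∀ p ∈ S.transitions, relabel Sum.inl p ∈ (S.comp T).transitions :=
      fun p hp => List.mem_cons_of_mem _ (List.mem_append_left _ (List.mem_map_of_mem hp))
    have hT : ∀ p ∈ T.transitions, relabel Sum.inr p ∈ (S.comp T).transitions :=
      fun p hp => List.mem_cons_of_mem _ (List.mem_append_right _ (List.mem_map_of_mem hp))
    exact (reads_relabel _ hS hu).trans
      (Reads.cons_none (by simp [comp]) (reads_relabel _ hT hv))

/-- Both the start state of `S.star` and the accepting state of `S` inside it have ε-edges to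
the final state and back to the start of `S`, so the same induction serves for both. -/
theorem reads_star_flatten (S : ThompsonNFA α σ) {parts : List (List α)}
    (hparts : ∀ y ∈ parts, S.toεNFA.Reads S.start S.accept y) {q : σ ⊕ Bool}
    (hfinish : .inr true ∈ S.star.toεNFA.step q none)
    (hloop : .inl S.start ∈ S.star.toεNFA.step q none) :
    S.star.toεNFA.Reads q (.inr true) parts.flatten := by
  induction parts generalizing q with
  | nil => exact Reads.cons_none hfinish (Reads.refl _ _)
  | cons y parts ih =>
    have hS : ∀ p ∈ S.transitions, relabel Sum.inl p ∈ S.star.transitions :=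
      fun p hp => List.mem_append_right _ (List.mem_map_of_mem hp)
    exact Reads.cons_none hloop ((reads_relabel _ hS (hparts y (by simp))).trans
      (ih (fun z hz => hparts z (by simp [hz])) (by simp [star]) (by simp [star])))

theorem accepts_star (S : ThompsonNFA α σ) :
    S.star.toεNFA.accepts = S.toεNFA.accepts∗ := by
  ext w
  rw [mem_accepts_iff]
  constructor
  · intro h
    refine h.backward_induction (P := fun q w => match q with
      | .inl s => ∃ u, S.toεNFA.Reads s S.accept u ∧ ∃ v ∈ S.toεNFA.accepts∗, u ++ v = w
      | .inr false => w ∈ S.toεNFA.accepts∗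
      | .inr true => w = []) rfl ?_
    intro s x u w h
    simp only [star, relabel, List.cons_append, List.nil_append, mem_toεNFA_step, List.mem_cons,
      Prod.mk.injEq, List.mem_map, Prod.exists, Prod.map_apply, id_eq, ↓existsAndEq,
      true_and] at h
    rcases h with ⟨rfl, rfl, rfl⟩ | ⟨rfl, rfl, rfl⟩ | ⟨rfl, rfl, rfl⟩ | ⟨rfl, rfl, rfl⟩ |
      ⟨a, b, h, rfl, rfl⟩
    · rintro rfl
      exact Language.nil_mem_kstar _
    · rintro ⟨u, hu, v, hv, rfl⟩
      exact (Language.append_mem_kstar (mem_accepts_iff.2 hu) hv : u ++ v ∈ _)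
    · rintro rfl
      exact ⟨[], Reads.refl _ _, [], Language.nil_mem_kstar _, rfl⟩
    · rintro ⟨u, hu, v, hv, rfl⟩
      exact ⟨[], Reads.refl _ _, u ++ v, Language.append_mem_kstar (mem_accepts_iff.2 hu) hv, rfl⟩
    · rintro ⟨u, hu, v, hv, rfl⟩
      exact ⟨_, hu.cons h, v, hv, List.append_assoc _ _ _⟩
  · intro h
    obtain ⟨parts, rfl, hparts⟩ := Language.mem_kstar.1 h
    exact reads_star_flatten S (fun y hy => mem_accepts_iff.1 (hparts y hy))
      (by simp [star]) (by simp [star])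

end ThompsonNFA

namespace RegularExpression

open ThompsonNFA

variable {α : Type}

def ThompsonStates : RegularExpression α → Type
  | zero | epsilon | char _ => Bool
  | plus S T => Bool ⊕ ThompsonStates S ⊕ ThompsonStates T
  | comp S T => ThompsonStates S ⊕ ThompsonStates T
  | star S => ThompsonStates S ⊕ Bool

instance instFintypeThompsonStates : (R : RegularExpression α) → Fintype R.ThompsonStates
  | zero | epsilon | char _ => inferInstanceAs (Fintype Bool)
  | plus S T =>
    letI := instFintypeThompsonStates S
    letI := instFintypeThompsonStates T
    inferInstanceAs (Fintype (Bool ⊕ S.ThompsonStates ⊕ T.ThompsonStates))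
  | comp S T =>
    letI := instFintypeThompsonStates S
    letI := instFintypeThompsonStates T
    inferInstanceAs (Fintype (S.ThompsonStates ⊕ T.ThompsonStates))
  | star S =>
    letI := instFintypeThompsonStates S
    inferInstanceAs (Fintype (S.ThompsonStates ⊕ Bool))

def thompson : (R : RegularExpression α) → ThompsonNFA α R.ThompsonStates
  | zero => .empty
  | epsilon => .edge none
  | char a => .edge (some a)
  | plus S T => S.thompson.plus T.thompson
  | comp S T => S.thompson.comp T.thompson
  | star S => S.thompson.star

theorem accepts_thompson (R : RegularExpression α) :
    R.thompson.toεNFA.accepts = R.matches' := by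
  induction R with
  | zero => exact accepts_empty
  | epsilon => exact (accepts_edge none).trans Language.one_def.symm
  | char a => exact accepts_edge (some a)
  | plus S T ihS ihT => exact (accepts_plus S.thompson T.thompson).trans (by rw [ihS, ihT]; rfl)
  | comp S T ihS ihT => exact (accepts_comp S.thompson T.thompson).trans (by rw [ihS, ihT]; rfl)
  | star S ihS => exact (accepts_star S.thompson).trans (by rw [ihS]; rfl)

theorem card_thompsonStates_le (R : RegularExpression α) :
    Nat.card R.ThompsonStates ≤ 2 * reSize R := by
  have card_bool : Nat.card Bool = 2 := by simp
  induction R with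
  | zero | epsilon | char _ => simp [ThompsonStates, reSize]
  | plus S T ihS ihT =>
    simp only [ThompsonStates, reSize, Nat.card_sum, card_bool]
    omega
  | comp S T ihS ihT =>
    simp only [ThompsonStates, reSize, Nat.card_sum]
    omega
  | star S ihS =>
    simp only [ThompsonStates, reSize, Nat.card_sum, card_bool]
    omega

theorem length_transitions_thompson_le (R : RegularExpression α) :
    R.thompson.transitions.length ≤ 4 * reSize R := by
  induction R with
  | zero => exact (length_transitions_empty (α := α)).trans_le (by simp [reSize])
  | epsilon => exact (length_transitions_edge none).trans_le (by simp [reSize])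
  | char a => exact (length_transitions_edge (some a)).trans_le (by simp [reSize])
  | plus S T ihS ihT =>
    exact (length_transitions_plus S.thompson T.thompson).trans_le (by simp only [reSize]; omega)
  | comp S T ihS ihT =>
    exact (length_transitions_comp S.thompson T.thompson).trans_le (by simp only [reSize]; omega)
  | star S ihS =>
    exact (length_transitions_star S.thompson).trans_le (by simp only [reSize]; omega)

end RegularExpression

/-- Thompson construction size bounds: every regular expression `R` with `m` nodes in its
syntax tree is accepted by an ε-NFA with at most `2m` states whose set of transitions is
finite of cardinality at most `4m`. -/
theorem thompson_size_bounds {α : Type} (R : RegularExpression α) :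
    ∃ (σ : Type) (_ : Fintype σ) (A : εNFA α σ),
      Fintype.card σ ≤ 2 * reSize R ∧
      {p : σ × (Option α) × σ | p.2.2 ∈ A.step p.1 p.2.1}.Finite ∧
      {p : σ × (Option α) × σ | p.2.2 ∈ A.step p.1 p.2.1}.ncard ≤ 4 * reSize R ∧
      A.accepts = R.matches' := by
  refine ⟨R.ThompsonStates, inferInstance, R.thompson.toεNFA, ?_,
    R.thompson.finite_transitionSet, ?_, R.accepts_thompson⟩
  · rw [← Nat.card_eq_fintype_card]
    exact R.card_thompsonStates_le
  · exact R.thompson.ncard_transitionSet_le.trans R.length_transitions_thompson_le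
end
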